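/- arXiv:2401.10649 — 8 statements merged into one kernel-verified Lean document; each statement's English description precedes it below -/
import Mathlib

section
/- Let f : ℝⁿ → ℝⁿ be continuously differentiable and admit a global flow φ. Let g : ℝⁿ → ℝ be a continuous function with g(x) ≥ 0 for all x, and suppose there exists a continuously differentiable function V : ℝⁿ → ℝ such that f(x) · ∇V(x) ≥ g(x) for all x ∈ ℝⁿ. Then g(y) = 0 for every limit point y of the system, i.e. for every x₀ ∈ ℝⁿ and every y ∈ ω(x₀, φ). -/
/-!
Along the trajectory of `x₀`, `V` is nondecreasing, and it converges to `V y` along the times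
`tₖ` at which the trajectory approaches `y`; hence its increment over a window of fixed length `δ`
after `tₖ` tends to `0`. If `g y > 0`, then `g > g y / 2` near `y`, and since `f` is bounded near
`y` a trajectory passing close to `y` stays in that neighbourhood for a uniform time `δ`, so each
of these increments is at least `g y / 2 * δ`.
-/

open Filter Topology Set Metric

section

variable {E : Type*} [NormedAddCommGroup E] [NormedSpace ℝ E]

theorem dist_le_mul_of_norm_deriv_lt_of_mem_ball {γ γ' : ℝ → E} {a b M ρ : ℝ}
    (hγ : ∀ s ∈ Icc a b, HasDerivAt γ (γ' s) s) (hM₀ : 0 ≤ M)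
    (hM : ∀ s ∈ Icc a b, γ s ∈ ball (γ a) ρ → ‖γ' s‖ < M) (hρ : M * (b - a) < ρ) :
    ∀ s ∈ Icc a b, dist (γ s) (γ a) ≤ M * (s - a) := by
  intro s hs
  rw [dist_eq_norm]
  refine image_norm_le_of_norm_deriv_right_lt_deriv_boundary' (f := fun s => γ s - γ a)
    (fun u hu => ((hγ u hu).sub_const _).continuousAt.continuousWithinAt)
    (fun u hu => ((hγ u (Ico_subset_Icc_self hu)).sub_const _).hasDerivWithinAt)
    (by simp) (by fun_prop)
    (fun u _ => (((hasDerivAt_id u).sub_const a).const_mul M).hasDerivWithinAt.congr_deriv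
      (mul_one M)) (fun u hu hnorm => hM u (Ico_subset_Icc_self hu) ?_) hs
  rw [mem_ball, dist_eq_norm, hnorm]
  exact (mul_le_mul_of_nonneg_left (sub_le_sub_right hu.2.le a) hM₀).trans_lt hρ

theorem exists_pos_forall_solution_mem_of_dist_lt {f : E → E} {y : E} (hf : ContinuousAt f y)
    {U : Set E} (hU : U ∈ 𝓝 y) :
    ∃ r > 0, ∃ δ > 0, ∀ γ : ℝ → E, (∀ s, HasDerivAt γ (f (γ s)) s) →
      ∀ t, dist (γ t) y < r → ∀ s ∈ Icc t (t + δ), γ s ∈ U := by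
  set M := ‖f y‖ + 1
  have hM : 0 < M := by positivity
  have hfM : ∀ᶠ z in 𝓝 y, ‖f z‖ < M := hf.norm.eventually (gt_mem_nhds (lt_add_one _))
  obtain ⟨ρ, hρ, hball⟩ := Metric.mem_nhds_iff.1 (inter_mem hU hfM)
  refine ⟨ρ / 2, half_pos hρ, ρ / (4 * M), by positivity, fun γ hγ t ht s hs => ?_⟩
  have hsub : ball (γ t) (ρ / 2) ⊆ ball y ρ :=
    ball_subset_ball' (by linarith [dist_comm y (γ t)])
  have hMδ : M * (ρ / (4 * M)) = ρ / 4 := by field_simp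
  have hdist := dist_le_mul_of_norm_deriv_lt_of_mem_ball (fun s _ => hγ s) hM.le
    (fun s _ hs => (hball (hsub hs)).2) (by rw [add_sub_cancel_left, hMδ]; linarith) s hs
  refine (hball (hsub ?_)).1
  calc dist (γ s) (γ t) ≤ M * (s - t) := hdist
    _ ≤ M * (ρ / (4 * M)) := mul_le_mul_of_nonneg_left (by linarith [hs.2]) hM.le
    _ < ρ / 2 := by linarith

end

theorem mul_sub_le_sub_of_le_hasDerivAt {h h' : ℝ → ℝ} {a b κ : ℝ}
    (hh : ∀ s ∈ Icc a b, HasDerivAt h (h' s) s) (hκ : ∀ s ∈ Icc a b, κ ≤ h' s) (hab : a ≤ b) :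
    κ * (b - a) ≤ h b - h a :=
  (convex_Icc a b).mul_sub_le_image_sub_of_le_deriv
    (fun s hs => (hh s hs).continuousAt.continuousWithinAt)
    (fun s hs => (hh s (interior_subset hs)).differentiableAt.differentiableWithinAt)
    (fun s hs => (hh s (interior_subset hs)).deriv ▸ hκ s (interior_subset hs))
    a (left_mem_Icc.2 hab) b (right_mem_Icc.2 hab) hab

theorem Monotone.tendsto_comp_add_sub {h : ℝ → ℝ} (hh : Monotone h) {ts : ℕ → ℝ}
    (hts : Tendsto ts atTop atTop) {L : ℝ} (hL : Tendsto (fun k => h (ts k)) atTop (𝓝 L))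
    {δ : ℝ} (hδ : 0 ≤ δ) : Tendsto (fun k => h (ts k + δ) - h (ts k)) atTop (𝓝 0) := by
  have hbound : ∀ t, h t ≤ L := fun t =>
    _root_.ge_of_tendsto hL ((hts.eventually_ge_atTop t).mono fun k hk => hh hk)
  have hshift : Tendsto (fun k => h (ts k + δ)) atTop (𝓝 L) :=
    tendsto_of_tendsto_of_tendsto_of_le_of_le hL tendsto_const_nhds
      (fun k => hh (le_add_of_nonneg_right hδ)) fun k => hbound _
  simpa using hshift.sub hL

theorem gradient_like_aux_function_vanishes_on_limit_set_general
    (n : ℕ)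
    (f : EuclideanSpace ℝ (Fin n) → EuclideanSpace ℝ (Fin n))
    (hf : ContDiff ℝ 1 f)
    (φ : EuclideanSpace ℝ (Fin n) → ℝ → EuclideanSpace ℝ (Fin n))
    (hφ' : ∀ x t, HasDerivAt (φ x) (f (φ x t)) t)
    (g : EuclideanSpace ℝ (Fin n) → ℝ)
    (hg : Continuous g) (hg0 : ∀ x, 0 ≤ g x)
    (V : EuclideanSpace ℝ (Fin n) → ℝ)
    (hV : ContDiff ℝ 1 V)
    (hVg : ∀ x, g x ≤ fderiv ℝ V x (f x))
    (x₀ y : EuclideanSpace ℝ (Fin n))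
    (hy : ∃ ts : ℕ → ℝ, Tendsto ts atTop atTop ∧
      Tendsto (fun k => φ x₀ (ts k)) atTop (𝓝 y)) :
    g y = 0 := by
  obtain ⟨ts, hts, hconv⟩ := hy
  have hderiv : ∀ t, HasDerivAt (fun t => V (φ x₀ t)) (fderiv ℝ V (φ x₀ t) (f (φ x₀ t))) t :=
    fun t => (hV.differentiable one_ne_zero _).hasFDerivAt.comp_hasDerivAt t (hφ' x₀ t)
  have hmono : Monotone fun t => V (φ x₀ t) :=
    monotone_of_deriv_nonneg (fun t => (hderiv t).differentiableAt)
      fun t => (hderiv t).deriv ▸ (hg0 _).trans (hVg _)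
  refine le_antisymm (not_lt.1 fun hpos => ?_) (hg0 y)
  obtain ⟨r, hr, δ, hδ, hstay⟩ := exists_pos_forall_solution_mem_of_dist_lt
    hf.continuous.continuousAt (hg.continuousAt.eventually (lt_mem_nhds (half_lt_self hpos)))
  have hgain : ∀ t, dist (φ x₀ t) y < r → g y / 2 * δ ≤ V (φ x₀ (t + δ)) - V (φ x₀ t) :=
    fun t ht => by
      simpa using mul_sub_le_sub_of_le_hasDerivAt (fun s _ => hderiv s)
        (fun s hs => (hstay _ (hφ' x₀) t ht s hs).le.trans (hVg _)) (by linarith)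
  have hlim := hmono.tendsto_comp_add_sub hts ((hV.continuous.tendsto y).comp hconv) hδ.le
  have hnear : ∀ᶠ k in atTop, dist (φ x₀ (ts k)) y < r := Metric.tendsto_nhds.1 hconv r hr
  have hgain_nonpos : g y / 2 * δ ≤ 0 :=
    ge_of_tendsto hlim (hnear.mono fun k hk => hgain _ hk)
  exact hgain_nonpos.not_gt (by positivity)

/-- If `V` is a C¹ auxiliary function with `f(x) · ∇V(x) ≥ g(x)` everywhere,
where `g` is continuous and nonnegative, then `g` vanishes at every ω-limit point of the
global flow `φ` of the C¹ vector field `f`. -/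
theorem gradient_like_aux_function_vanishes_on_limit_set
    (n : ℕ)
    (f : EuclideanSpace ℝ (Fin n) → EuclideanSpace ℝ (Fin n))
    (hf : ContDiff ℝ 1 f)
    (φ : EuclideanSpace ℝ (Fin n) → ℝ → EuclideanSpace ℝ (Fin n))
    (hφ : ContDiff ℝ 1 (fun p : EuclideanSpace ℝ (Fin n) × ℝ => φ p.1 p.2))
    (hφ0 : ∀ x, φ x 0 = x)
    (hφ' : ∀ x t, HasDerivAt (φ x) (f (φ x t)) t)
    (g : EuclideanSpace ℝ (Fin n) → ℝ)
    (hg : Continuous g) (hg0 : ∀ x, 0 ≤ g x)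
    (V : EuclideanSpace ℝ (Fin n) → ℝ)
    (hV : ContDiff ℝ 1 V)
    (hVg : ∀ x, g x ≤ fderiv ℝ V x (f x))
    (x₀ y : EuclideanSpace ℝ (Fin n))
    (hy : ∃ ts : ℕ → ℝ, Tendsto ts atTop atTop ∧
      Tendsto (fun k => φ x₀ (ts k)) atTop (𝓝 y)) :
    g y = 0 :=
  gradient_like_aux_function_vanishes_on_limit_set_general n f hf φ hφ' g hg hg0 V hV hVg x₀ y hy
end

section
/- Let f : ℝⁿ → ℝⁿ be continuously differentiable and admit a global flow φ. Suppose there exists a continuously differentiable function V : ℝⁿ → ℝ such that f(x) · ∇V(x) ≥ ‖f(x)‖² for all x ∈ ℝⁿ (Euclidean norm). Then the limit set of the system equals the set of stationary points: every limit point y satisfies f(y) = 0, and conversely every point y with f(y) = 0 satisfies y ∈ ω(y, φ). -/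
/-!
LaSalle's argument. Along every trajectory `V` is nondecreasing, since its derivative is at least
`‖f‖² ≥ 0`. If `φ x₀ tₖ → y`, monotonicity forces `V (φ x₀ t) → V y`; by the flow property and
continuity of `φ`, `φ x₀ (tₖ + s) → φ y s`, so `V` is constant, equal to `V y`, along the trajectory
of `y`. Its derivative there, which dominates `‖f y‖²`, therefore vanishes. Conversely, by
uniqueness of solutions the trajectory of a stationary point is constant.
-/

open Filter Topology

variable {E : Type*} [NormedAddCommGroup E] [NormedSpace ℝ E] {f : E → E}

theorem LocallyLipschitz.eq_of_hasDerivAt_of_eq (hf : LocallyLipschitz f) {γ₁ γ₂ : ℝ → E}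
    (hγ₁ : ∀ t, HasDerivAt γ₁ (f (γ₁ t)) t) (hγ₂ : ∀ t, HasDerivAt γ₂ (f (γ₂ t)) t)
    {t₀ : ℝ} (heq : γ₁ t₀ = γ₂ t₀) : γ₁ = γ₂ := by
  have hcont₁ : Continuous γ₁ := continuous_iff_continuousAt.2 fun t => (hγ₁ t).continuousAt
  have hcont₂ : Continuous γ₂ := continuous_iff_continuousAt.2 fun t => (hγ₂ t).continuousAt
  have hopen : IsOpen {t | γ₁ t = γ₂ t} := by
    refine isOpen_iff_mem_nhds.2 fun t (ht : γ₁ t = γ₂ t) => ?_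
    obtain ⟨K, s, hs, hK⟩ := hf (γ₁ t)
    have hs₂ : s ∈ 𝓝 (γ₂ t) := ht ▸ hs
    exact ODE_solution_unique_of_eventually (v := fun _ => f) (s := fun _ => s)
      (.of_forall fun _ => hK)
      ((hcont₁.tendsto t).eventually_mem hs |>.mono fun u hu => ⟨hγ₁ u, hu⟩)
      ((hcont₂.tendsto t).eventually_mem hs₂ |>.mono fun u hu => ⟨hγ₂ u, hu⟩) ht
  have hclopen : IsClopen {t | γ₁ t = γ₂ t} := ⟨isClosed_eq hcont₁ hcont₂, hopen⟩
  funext t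
  exact Set.eq_univ_iff_forall.1 (hclopen.eq_univ ⟨t₀, heq⟩) t

section Flow

variable {φ : E → ℝ → E}

theorem flow_add (hf : LocallyLipschitz f) (hφ0 : ∀ x, φ x 0 = x)
    (hφ' : ∀ x t, HasDerivAt (φ x) (f (φ x t)) t) (x : E) (t s : ℝ) :
    φ x (t + s) = φ (φ x t) s := by
  have hshift : ∀ s, HasDerivAt (fun s => φ x (t + s)) (f (φ x (t + s))) s :=
    fun s => (hφ' x (t + s)).comp_const_add t s
  refine congrFun (hf.eq_of_hasDerivAt_of_eq hshift (hφ' (φ x t)) (t₀ := 0) ?_) s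
  simp only [add_zero, hφ0]

theorem flow_eq_self_of_eq_zero (hf : LocallyLipschitz f) (hφ0 : ∀ x, φ x 0 = x)
    (hφ' : ∀ x t, HasDerivAt (φ x) (f (φ x t)) t) {y : E} (hy : f y = 0) (t : ℝ) :
    φ y t = y := by
  have hconst : ∀ t, HasDerivAt (fun _ : ℝ => y) (f y) t := fun t => hy ▸ hasDerivAt_const t y
  exact congrFun (hf.eq_of_hasDerivAt_of_eq (hφ' y) hconst (t₀ := 0) (hφ0 y)) t

end Flow

section Lyapunov

variable {V : E → ℝ} {γ : ℝ → E}

theorem hasDerivAt_comp_trajectory (hV : Differentiable ℝ V)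
    (hγ : ∀ t, HasDerivAt γ (f (γ t)) t) (t : ℝ) :
    HasDerivAt (fun t => V (γ t)) (fderiv ℝ V (γ t) (f (γ t))) t :=
  (hV (γ t)).hasFDerivAt.comp_hasDerivAt t (hγ t)

theorem monotone_comp_trajectory (hV : Differentiable ℝ V)
    (hVf : ∀ x, 0 ≤ fderiv ℝ V x (f x)) (hγ : ∀ t, HasDerivAt γ (f (γ t)) t) :
    Monotone fun t => V (γ t) :=
  monotone_of_deriv_nonneg
    (fun t => (hasDerivAt_comp_trajectory hV hγ t).differentiableAt)
    (fun t => (hasDerivAt_comp_trajectory hV hγ t).deriv ▸ hVf (γ t))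

theorem eq_zero_of_tendsto_flow {φ : E → ℝ → E} (hf : LocallyLipschitz f)
    (hφ : Continuous fun p : E × ℝ => φ p.1 p.2) (hφ0 : ∀ x, φ x 0 = x)
    (hφ' : ∀ x t, HasDerivAt (φ x) (f (φ x t)) t) (hV : Differentiable ℝ V)
    (hVf : ∀ x, ‖f x‖ ^ 2 ≤ fderiv ℝ V x (f x)) {x₀ y : E} {ts : ℕ → ℝ}
    (hts : Tendsto ts atTop atTop) (hconv : Tendsto (fun k => φ x₀ (ts k)) atTop (𝓝 y)) :
    f y = 0 := by
  have hVf₀ : ∀ x, 0 ≤ fderiv ℝ V x (f x) := fun x => (sq_nonneg _).trans (hVf x)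
  have hlim : Tendsto (fun t => V (φ x₀ t)) atTop (𝓝 (V y)) :=
    (tendsto_iff_tendsto_subseq_of_monotone (monotone_comp_trajectory hV hVf₀ (hφ' x₀)) hts).2
      ((hV.continuous.tendsto y).comp hconv)
  have hconst : ∀ s, V (φ y s) = V y := fun s => by
    have hshift : Tendsto (fun k => V (φ x₀ (ts k + s))) atTop (𝓝 (V y)) :=
      hlim.comp (tendsto_atTop_add_const_right _ s hts)
    have hflow : Tendsto (fun k => V (φ x₀ (ts k + s))) atTop (𝓝 (V (φ y s))) := by
      simp only [flow_add hf hφ0 hφ']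
      exact (hV.continuous.tendsto _).comp
        ((hφ.tendsto (y, s)).comp (hconv.prodMk_nhds tendsto_const_nhds))
    exact tendsto_nhds_unique hflow hshift
  have hderiv : fderiv ℝ V y (f y) = 0 := by
    have h := hasDerivAt_comp_trajectory hV (hφ' y) 0
    simp only [hconst, hφ0] at h
    exact h.unique (hasDerivAt_const 0 (V y))
  simpa using (hVf y).trans hderiv.le

end Lyapunov

/-- If `V` is a C¹ function with `f(x) · ∇V(x) ≥ ‖f(x)‖²` everywhere, then
the limit set of the global flow `φ` of the C¹ vector field `f` equals the set of
stationary points of `f`. -/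
theorem limit_set_eq_stationary_points
    (n : ℕ)
    (f : EuclideanSpace ℝ (Fin n) → EuclideanSpace ℝ (Fin n))
    (hf : ContDiff ℝ 1 f)
    (φ : EuclideanSpace ℝ (Fin n) → ℝ → EuclideanSpace ℝ (Fin n))
    (hφ : ContDiff ℝ 1 (fun p : EuclideanSpace ℝ (Fin n) × ℝ => φ p.1 p.2))
    (hφ0 : ∀ x, φ x 0 = x)
    (hφ' : ∀ x t, HasDerivAt (φ x) (f (φ x t)) t)
    (V : EuclideanSpace ℝ (Fin n) → ℝ)
    (hV : ContDiff ℝ 1 V)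
    (hVf : ∀ x, ‖f x‖ ^ 2 ≤ fderiv ℝ V x (f x)) :
    (∀ x₀ y : EuclideanSpace ℝ (Fin n),
        (∃ ts : ℕ → ℝ, Tendsto ts atTop atTop ∧
          Tendsto (fun k => φ x₀ (ts k)) atTop (𝓝 y)) → f y = 0) ∧
    (∀ y : EuclideanSpace ℝ (Fin n), f y = 0 →
        ∃ ts : ℕ → ℝ, Tendsto ts atTop atTop ∧
          Tendsto (fun k => φ y (ts k)) atTop (𝓝 y)) := by
  have hfL : LocallyLipschitz f := hf.locallyLipschitz
  refine ⟨fun x₀ y ⟨ts, hts, hconv⟩ => ?_, fun y hy => ?_⟩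
  · exact eq_zero_of_tendsto_flow hfL hφ.continuous hφ0 hφ' (hV.differentiable one_ne_zero) hVf
      hts hconv
  · refine ⟨fun k => (k : ℝ), tendsto_natCast_atTop_atTop, ?_⟩
    simp only [flow_eq_self_of_eq_zero hfL hφ0 hφ' hy]
    exact tendsto_const_nhds
end

section
/- Let f : ℝⁿ → ℝⁿ be continuously differentiable and admit a global flow φ, and suppose there exists a continuously differentiable function V : ℝⁿ → ℝ such that f(x) · ∇V(x) ≥ ‖f(x)‖² for all x ∈ ℝⁿ. Then the system has no nonconstant periodic orbits: if φ(x, T) = x for some x ∈ ℝⁿ and some T > 0, then f(x) = 0 (so φ(x, t) = x for all t). -/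
/-!
Along an orbit, `V ∘ φ` has derivative `∇V · f ≥ ‖f‖² ≥ 0`, so it is nondecreasing; on a
periodic orbit it takes the same value at times `0` and `T`, hence is constant on `[0, T]`, and
its derivative vanishes there. This forces `f x = 0`, and then the orbit is the constant
solution by uniqueness of solutions of `ẋ = f(x)` (`f` is locally Lipschitz, being C¹).
-/

open Set Topology

theorem eq_zero_of_hasDerivAt_nonneg_of_apply_eq {g g' : ℝ → ℝ} {a b : ℝ} (hab : a < b)
    (hg : ∀ t ∈ Icc a b, HasDerivAt g (g' t) t) (hg' : ∀ t ∈ Ioo a b, 0 ≤ g' t)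
    (heq : g a = g b) : ∀ t ∈ Icc a b, g' t = 0 := by
  have hmono : MonotoneOn g (Icc a b) := by
    refine monotoneOn_of_hasDerivWithinAt_nonneg (f' := g') (convex_Icc a b)
      (HasDerivAt.continuousOn hg) (fun t ht => ?_) (fun t ht => ?_)
    · rw [interior_Icc] at ht ⊢
      exact (hg t (Ioo_subset_Icc_self ht)).hasDerivWithinAt
    · exact hg' t (interior_Icc (a := a) ▸ ht)
  have hconst : EqOn g (fun _ => g a) (Icc a b) := fun t ht =>
    le_antisymm (heq ▸ hmono ht (right_mem_Icc.2 hab.le) ht.2)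
      (hmono (left_mem_Icc.2 hab.le) ht ht.1)
  intro t ht
  exact (uniqueDiffOn_Icc hab t ht).eq_deriv _ (hg t ht).hasDerivWithinAt
    ((hasDerivWithinAt_const t _ (g a)).congr hconst (hconst ht))

section

variable {E : Type*} [NormedAddCommGroup E] [NormedSpace ℝ E]

theorem apply_eq_zero_of_returns_of_sq_norm_le_fderiv {f : E → E} {V : E → ℝ}
    (hV : Differentiable ℝ V) (hVf : ∀ y, ‖f y‖ ^ 2 ≤ fderiv ℝ V y (f y))
    {γ : ℝ → E} (hγ : ∀ t, HasDerivAt γ (f (γ t)) t) {a b : ℝ} (hab : a < b)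
    (hret : γ a = γ b) : ∀ t ∈ Icc a b, f (γ t) = 0 := by
  have hVγ : ∀ t, HasDerivAt (V ∘ γ) (fderiv ℝ V (γ t) (f (γ t))) t := fun t =>
    (hV (γ t)).hasFDerivAt.comp_hasDerivAt t (hγ t)
  have hderiv_zero := eq_zero_of_hasDerivAt_nonneg_of_apply_eq hab (fun t _ => hVγ t)
    (fun t _ => (sq_nonneg _).trans (hVf (γ t))) (congrArg V hret)
  intro t ht
  have hsq : ‖f (γ t)‖ ^ 2 ≤ 0 := hderiv_zero t ht ▸ hVf (γ t)
  simpa using hsq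

theorem eq_of_hasDerivAt_of_apply_eq_zero {f : E → E} {x₀ : E} (hf : ContDiffAt ℝ 1 f x₀)
    (hx₀ : f x₀ = 0) {γ : ℝ → E} (hγ : ∀ t, HasDerivAt γ (f (γ t)) t) {t₀ : ℝ}
    (hγt₀ : γ t₀ = x₀) (t : ℝ) : γ t = x₀ := by
  obtain ⟨K, s, hs, hlip⟩ := hf.exists_lipschitzOnWith
  have hγcont : Continuous γ := continuous_iff_continuousAt.2 fun t => (hγ t).continuousAt
  have hopen : IsOpen {t | γ t = x₀} := by
    refine isOpen_iff_mem_nhds.2 fun t₁ (ht₁ : γ t₁ = x₀) => ?_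
    have hγs : ∀ᶠ t in 𝓝 t₁, γ t ∈ s :=
      hγcont.continuousAt.preimage_mem_nhds (ht₁ ▸ hs)
    exact ODE_solution_unique_of_eventually (v := fun _ => f) (s := fun _ => s)
      (.of_forall fun _ => hlip) (hγs.mono fun t ht => ⟨hγ t, ht⟩)
      (.of_forall fun t => ⟨hx₀ ▸ hasDerivAt_const t x₀, mem_of_mem_nhds hs⟩) ht₁
  have hclopen : IsClopen {t | γ t = x₀} := ⟨isClosed_eq hγcont continuous_const, hopen⟩
  exact eq_univ_iff_forall.1 (hclopen.eq_univ ⟨t₀, hγt₀⟩) t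

end

theorem no_nonconstant_periodic_orbits_general
    (n : ℕ)
    (f : EuclideanSpace ℝ (Fin n) → EuclideanSpace ℝ (Fin n))
    (hf : ContDiff ℝ 1 f)
    (φ : EuclideanSpace ℝ (Fin n) → ℝ → EuclideanSpace ℝ (Fin n))
    (hφ0 : ∀ x, φ x 0 = x)
    (hφ' : ∀ x t, HasDerivAt (φ x) (f (φ x t)) t)
    (V : EuclideanSpace ℝ (Fin n) → ℝ)
    (hV : ContDiff ℝ 1 V)
    (hVf : ∀ x, ‖f x‖ ^ 2 ≤ fderiv ℝ V x (f x))
    (x : EuclideanSpace ℝ (Fin n)) (T : ℝ) (hT : 0 < T) (hper : φ x T = x) :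
    f x = 0 ∧ ∀ t : ℝ, φ x t = x := by
  have hfx : f x = 0 := by
    simpa only [hφ0] using apply_eq_zero_of_returns_of_sq_norm_le_fderiv
      (hV.differentiable one_ne_zero) hVf (hφ' x) hT (by rw [hφ0, hper]) 0
      (left_mem_Icc.2 hT.le)
  exact ⟨hfx, eq_of_hasDerivAt_of_apply_eq_zero hf.contDiffAt hfx (hφ' x) (hφ0 x)⟩

/-- If `V` is a C¹ function with `f(x) · ∇V(x) ≥ ‖f(x)‖²` everywhere, then
the global flow `φ` of the C¹ vector field `f` has no nonconstant periodic orbits: any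
point returning to itself after a positive time `T` is a stationary point (so its orbit is
constant). -/
theorem no_nonconstant_periodic_orbits
    (n : ℕ)
    (f : EuclideanSpace ℝ (Fin n) → EuclideanSpace ℝ (Fin n))
    (hf : ContDiff ℝ 1 f)
    (φ : EuclideanSpace ℝ (Fin n) → ℝ → EuclideanSpace ℝ (Fin n))
    (hφ : ContDiff ℝ 1 (fun p : EuclideanSpace ℝ (Fin n) × ℝ => φ p.1 p.2))
    (hφ0 : ∀ x, φ x 0 = x)
    (hφ' : ∀ x t, HasDerivAt (φ x) (f (φ x t)) t)
    (V : EuclideanSpace ℝ (Fin n) → ℝ)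
    (hV : ContDiff ℝ 1 V)
    (hVf : ∀ x, ‖f x‖ ^ 2 ≤ fderiv ℝ V x (f x))
    (x : EuclideanSpace ℝ (Fin n)) (T : ℝ) (hT : 0 < T) (hper : φ x T = x) :
    f x = 0 ∧ ∀ t : ℝ, φ x t = x :=
  no_nonconstant_periodic_orbits_general n f hf φ hφ0 hφ' V hV hVf x T hT hper
end

section
/- Let σ > 0, β > 0, ρ > 0. There exists a radius R > 0, depending only on σ, β, ρ, such that for every global solution x : ℝ → ℝ³ of the Lorenz system there exists a time T with ‖x(t)‖ ≤ R for all t ≥ T (i.e. the Lorenz system is dissipative in the sense of Levinson: it possesses a bounded globally absorbing set). -/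
/-!
Along a solution of the Lorenz system the cubic terms cancel in the derivative of
`V = x₁² + x₂² + (x₃ - σ - ρ)²`, leaving `V' = -2σx₁² - 2x₂² - 2βx₃² + 2β(σ + ρ)x₃`,
which is at most `-m V + β(σ + ρ)²` with `m = min (2σ, 2, β)`. By Grönwall's inequality `V`
eventually drops below `β(σ + ρ)²/m + 1`, and `‖x‖² ≤ 2V + 2(σ + ρ)²`.
-/

open Filter Topology

theorem tendsto_gronwallBound_atTop {δ K ε : ℝ} (hK : K < 0) :
    Tendsto (gronwallBound δ K ε) atTop (𝓝 (-(ε / K))) := by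
  rw [gronwallBound_of_K_ne_0 hK.ne]
  have hexp : Tendsto (fun x => Real.exp (K * x)) atTop (𝓝 0) :=
    Real.tendsto_exp_atBot.comp (tendsto_id.const_mul_atTop_of_neg hK)
  simpa using (hexp.const_mul δ).add ((hexp.sub_const 1).const_mul (ε / K))

theorem eventually_le_of_hasDerivAt_le_mul_add {f f' : ℝ → ℝ} {K ε b : ℝ} (hK : K < 0)
    (hf : ∀ t, HasDerivAt f (f' t) t) (bound : ∀ t, f' t ≤ K * f t + ε) (hb : -(ε / K) < b) :
    ∀ᶠ t in atTop, f t ≤ b := by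
  have hgronwall : ∀ t ≥ 0, f t ≤ gronwallBound (f 0) K ε t := fun t ht => by
    simpa using le_gronwallBound_of_liminf_deriv_right_le
      (fun s _ => (hf s).continuousAt.continuousWithinAt)
      (fun s _ r hr => (hf s).hasDerivWithinAt.liminf_right_slope_le hr) le_rfl
      (fun s _ => bound s) t ⟨ht, le_rfl⟩
  filter_upwards [eventually_ge_atTop 0, (tendsto_gronwallBound_atTop hK).eventually_lt_const hb] with t ht hlt
  exact (hgronwall t ht).trans hlt.le

def lorenzLyapunov (σ ρ : ℝ) (v : EuclideanSpace ℝ (Fin 3)) : ℝ :=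
  v 0 ^ 2 + v 1 ^ 2 + (v 2 - (σ + ρ)) ^ 2

theorem hasDerivAt_lorenzLyapunov {σ β ρ t : ℝ} {x : ℝ → EuclideanSpace ℝ (Fin 3)}
    (h₀ : HasDerivAt (fun s => x s 0) (σ * (x t 1 - x t 0)) t)
    (h₁ : HasDerivAt (fun s => x s 1) (x t 0 * (ρ - x t 2) - x t 1) t)
    (h₂ : HasDerivAt (fun s => x s 2) (x t 0 * x t 1 - β * x t 2) t) :
    HasDerivAt (fun s => lorenzLyapunov σ ρ (x s))
      (-2 * σ * x t 0 ^ 2 - 2 * x t 1 ^ 2 - 2 * β * x t 2 ^ 2 + 2 * β * (σ + ρ) * x t 2) t := by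
  refine (((h₀.fun_pow 2).add (h₁.fun_pow 2)).add
    ((h₂.sub_const (σ + ρ)).fun_pow 2)).congr_deriv ?_
  push_cast
  ring

theorem lorenzLyapunov_deriv_le {σ β ρ m : ℝ} (hβ : 0 ≤ β) (hmσ : m ≤ 2 * σ) (hm : m ≤ 2)
    (hmβ : m ≤ β) (v : EuclideanSpace ℝ (Fin 3)) :
    -2 * σ * v 0 ^ 2 - 2 * v 1 ^ 2 - 2 * β * v 2 ^ 2 + 2 * β * (σ + ρ) * v 2 ≤
      -m * lorenzLyapunov σ ρ v + β * (σ + ρ) ^ 2 := by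
  unfold lorenzLyapunov
  nlinarith [mul_le_mul_of_nonneg_right hmσ (sq_nonneg (v 0)),
    mul_le_mul_of_nonneg_right hm (sq_nonneg (v 1)),
    mul_le_mul_of_nonneg_right hmβ (sq_nonneg (v 2 - (σ + ρ))),
    mul_nonneg hβ (sq_nonneg (v 2))]

theorem norm_sq_le_lorenzLyapunov (σ ρ : ℝ) (v : EuclideanSpace ℝ (Fin 3)) :
    ‖v‖ ^ 2 ≤ 2 * lorenzLyapunov σ ρ v + 2 * (σ + ρ) ^ 2 := by
  rw [EuclideanSpace.real_norm_sq_eq, Fin.sum_univ_three, lorenzLyapunov]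
  nlinarith [sq_nonneg (v 0), sq_nonneg (v 1), sq_nonneg (v 2 - 2 * (σ + ρ))]

theorem lorenz_dissipative_general
    (σ β ρ : ℝ) (hσ : 0 < σ) (hβ : 0 < β) :
    ∃ R > (0 : ℝ), ∀ x : ℝ → EuclideanSpace ℝ (Fin 3),
      (∀ t : ℝ,
        HasDerivAt (fun s => x s 0) (σ * (x t 1 - x t 0)) t ∧
        HasDerivAt (fun s => x s 1) (x t 0 * (ρ - x t 2) - x t 1) t ∧
        HasDerivAt (fun s => x s 2) (x t 0 * x t 1 - β * x t 2) t) →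
      ∃ T : ℝ, ∀ t ≥ T, ‖x t‖ ≤ R := by
  set m := min (min (2 * σ) 2) β
  have hm : 0 < m := lt_min (lt_min (by positivity) two_pos) hβ
  set b := β * (σ + ρ) ^ 2 / m + 1
  refine ⟨√(2 * b + 2 * (σ + ρ) ^ 2), by positivity, fun x hx => ?_⟩
  have hV : ∀ᶠ t in atTop, lorenzLyapunov σ ρ (x t) ≤ b :=
    eventually_le_of_hasDerivAt_le_mul_add (neg_neg_of_pos hm)
      (fun t => hasDerivAt_lorenzLyapunov (hx t).1 (hx t).2.1 (hx t).2.2)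
      (fun t => lorenzLyapunov_deriv_le hβ.le ((min_le_left _ _).trans (min_le_left _ _))
        ((min_le_left _ _).trans (min_le_right _ _)) (min_le_right _ _) (x t))
      (by rw [div_neg, neg_neg]; linarith)
  obtain ⟨T, hT⟩ := eventually_atTop.1 hV
  refine ⟨T, fun t ht => Real.le_sqrt_of_sq_le ?_⟩
  linarith [norm_sq_le_lorenzLyapunov σ ρ (x t), hT t ht]

/-- The Lorenz system is dissipative in the sense of Levinson: for positive
parameters `σ, β, ρ` there is a radius `R > 0` (depending only on the parameters) such that
every global solution eventually stays in the ball of radius `R`. -/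
theorem lorenz_dissipative
    (σ β ρ : ℝ) (hσ : 0 < σ) (hβ : 0 < β) (hρ : 0 < ρ) :
    ∃ R > (0 : ℝ), ∀ x : ℝ → EuclideanSpace ℝ (Fin 3),
      (∀ t : ℝ,
        HasDerivAt (fun s => x s 0) (σ * (x t 1 - x t 0)) t ∧
        HasDerivAt (fun s => x s 1) (x t 0 * (ρ - x t 2) - x t 1) t ∧
        HasDerivAt (fun s => x s 2) (x t 0 * x t 1 - β * x t 2) t) →
      ∃ T : ℝ, ∀ t ≥ T, ‖x t‖ ≤ R :=
  lorenz_dissipative_general σ β ρ hσ hβ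
end

section
/- Fix an integer M ≥ 1 and real numbers r_min ≤ r_max, and set ρ_min = M·r_min + 1 and ρ_max = M·r_max + 1. Let f₁ = 30x₂ − 30x₁, f₂ = 3Mx₁r − 3Mx₁x₃ − 3x₂ + 3x₁, f₃ = 3Mx₁x₂ − 8x₃, regarded as polynomials in ℝ[x₁,x₂,x₃,r]. Suppose there exist polynomials V, b₁, …, b_{m₂} ∈ ℝ[x₁,x₂,x₃,r] and s, a₁, …, a_{m₁} ∈ ℝ[x₁,x₂,x₃], and real symmetric positive semidefinite matrices Q (of size m₁ × m₁) and R (of size m₂ × m₂), such that the polynomial identities s = aᵀQa and f₁·∂V/∂x₁ + f₂·∂V/∂x₂ + f₃·∂V/∂x₃ − (x₂ − x₁)² − M²(r − r_min)(r_max − r)·s = bᵀRb hold in ℝ[x₁,x₂,x₃,r]. Then for every ρ with ρ_min ≤ ρ ≤ ρ_max, the Lorenz system with σ = 10 and β = 8/3 is globally stable: every global solution x : ℝ → ℝ³ satisfies dist(x(t), E_ρ) → 0 as t → ∞, where E_ρ is the set of stationary points of the Lorenz vector field with parameters σ = 10, β = 8/3, ρ. -/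
/-!
Evaluated at `(x / M, (ρ - 1) / M)`, the polynomial `V` is a Lyapunov-type function along every
Lorenz trajectory: by the certificate its derivative dominates `(x₂ - x₁)² / (3M²)`. Trajectories
are eventually trapped in a ball, so `V` stays bounded along them and Barbalat's lemma gives
`w = x₂ - x₁ → 0`. Since `w''` is bounded, Landau's inequality gives `w' → 0`, hence
`x₁ (ρ - 1 - x₃) = w' + (σ + 1) w → 0`. Finally `g = x₁² - β x₃` solves
`g' = -β g + (2σ - β) x₁ w`, a stable linear equation with vanishing forcing, so `g → 0`. These
three quantities vanish exactly on the equilibria, and compactness turns this into convergence of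
the distance to the equilibrium set.
-/

open Filter Topology MvPolynomial Metric Set

section Asymptotics

variable {f f' : ℝ → ℝ}

theorem le_gronwallBound_of_hasDerivAt {K ε a x : ℝ} (hf : ∀ t, HasDerivAt f (f' t) t)
    (bound : ∀ t, a ≤ t → f' t ≤ K * f t + ε) (hx : a ≤ x) :
    f x ≤ gronwallBound (f a) K ε (x - a) :=
  le_gronwallBound_of_liminf_deriv_right_le (fun t _ => (hf t).continuousAt.continuousWithinAt)
    (fun t _ _ hr => (hf t).hasDerivWithinAt.liminf_right_slope_le hr) le_rfl
    (fun t ht => bound t ht.1) x ⟨hx, le_rfl⟩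

theorem tendsto_gronwallBound_of_neg {δ K ε : ℝ} (hK : K < 0) :
    Tendsto (gronwallBound δ K ε) atTop (𝓝 (-ε / K)) := by
  have hexp : Tendsto (fun x => Real.exp (K * x)) atTop (𝓝 0) :=
    Real.tendsto_exp_atBot.comp (tendsto_id.const_mul_atTop_of_neg hK)
  rw [gronwallBound_of_K_ne_0 hK.ne]
  convert (hexp.const_mul δ).add ((hexp.sub_const 1).const_mul (ε / K)) using 2
  ring

/-- Solutions of `y' = -c y + d` tend to `d / c`. -/
theorem eventually_lt_of_deriv_le_neg_mul_add {c d a b : ℝ} (hc : 0 < c)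
    (hf : ∀ t, HasDerivAt f (f' t) t) (bound : ∀ t, a ≤ t → f' t ≤ -c * f t + d)
    (hb : d / c < b) : ∀ᶠ t in atTop, f t < b := by
  have hlim : Tendsto (fun t => gronwallBound (f a) (-c) d (t - a)) atTop (𝓝 (d / c)) := by
    convert (tendsto_gronwallBound_of_neg (δ := f a) (ε := d) (neg_lt_zero.2 hc)).comp
      (tendsto_atTop_add_const_right _ (-a) tendsto_id) using 2
    · simp [sub_eq_add_neg]
    · ring
  filter_upwards [hlim.eventually (gt_mem_nhds hb), eventually_ge_atTop a] with t hlt hat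
  exact (le_gronwallBound_of_hasDerivAt hf bound hat).trans_lt hlt

theorem tendsto_zero_of_deriv_eq_neg_mul_add {h : ℝ → ℝ} {c : ℝ} (hc : 0 < c)
    (hf : ∀ t, HasDerivAt f (f' t) t) (hf' : ∀ t, f' t = -c * f t + h t)
    (hh : Tendsto h atTop (𝓝 0)) : Tendsto f atTop (𝓝 0) := by
  rw [Metric.tendsto_nhds]
  intro b hb
  obtain ⟨a, ha⟩ := eventually_atTop.1 <| (Metric.tendsto_nhds.1 hh) (c * b / 2) (by positivity)
  have hdb : c * b / 2 / c < b := by rw [mul_div_assoc, mul_div_cancel_left₀ _ hc.ne']; linarith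
  have hupper := eventually_lt_of_deriv_le_neg_mul_add hc hf (a := a) (fun t ht => by
    have := ha t ht; rw [Real.dist_eq, sub_zero, abs_lt] at this; rw [hf']; linarith) hdb
  have hlower := eventually_lt_of_deriv_le_neg_mul_add (f := fun t => -f t) hc
    (fun t => (hf t).neg) (a := a)
    (fun t ht => by
      have := ha t ht; rw [Real.dist_eq, sub_zero, abs_lt] at this; rw [hf']; linarith) hdb
  filter_upwards [hupper, hlower] with t h₁ h₂
  rw [Real.dist_eq, sub_zero, abs_lt]
  exact ⟨by linarith, h₁⟩

theorem exists_frequently_forall_Icc_le_abs {w w' : ℝ → ℝ} {K : ℝ}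
    (hw : ∀ t, HasDerivAt w (w' t) t) (hK : ∀ᶠ t in atTop, |w' t| ≤ K)
    (h : ¬Tendsto w atTop (𝓝 0)) :
    ∃ ε > 0, ∃ δ > 0, ∃ᶠ t in atTop, ∀ s ∈ Icc t (t + δ), ε ≤ |w s| := by
  obtain ⟨ε, hε, hfreq⟩ : ∃ ε > 0, ∃ᶠ t in atTop, ε ≤ |w t| := by
    simpa only [Metric.tendsto_nhds, Real.dist_eq, sub_zero, not_forall, not_eventually,
      not_lt, exists_prop] using h
  set K' := max K 1
  have hK' : 0 < K' := lt_max_of_lt_right one_pos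
  refine ⟨ε / 2, by positivity, ε / (2 * K'), by positivity, ?_⟩
  refine (hfreq.and_eventually (eventually_forall_ge_atTop.2 hK)).mono ?_
  rintro t ⟨hwt, hK⟩ s hs
  have hlip := norm_image_sub_le_of_norm_deriv_le_segment'
    (fun r _ => (hw r).hasDerivWithinAt) (fun r hr => (hK r hr.1).trans (le_max_left K 1)) s hs
  have hδ : K' * (s - t) ≤ ε / 2 := by
    calc K' * (s - t) ≤ K' * (ε / (2 * K')) := by gcongr; linarith [hs.2]
      _ = ε / 2 := by field_simp
  rw [Real.norm_eq_abs] at hlip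
  linarith [abs_sub_abs_le_abs_sub (w t) (w s), abs_sub_comm (w s) (w t)]

/-- Barbalat's lemma. -/
theorem tendsto_zero_of_sq_le_deriv {v v' w w' : ℝ → ℝ} {c A K : ℝ} (hc : 0 < c)
    (hv : ∀ t, HasDerivAt v (v' t) t) (hw : ∀ t, HasDerivAt w (w' t) t)
    (hvw : ∀ t, c * w t ^ 2 ≤ v' t) (hvA : ∀ᶠ t in atTop, v t ≤ A)
    (hwK : ∀ᶠ t in atTop, |w' t| ≤ K) : Tendsto w atTop (𝓝 0) := by
  by_contra h
  obtain ⟨ε, hε, δ, hδ, hfreq⟩ := exists_frequently_forall_Icc_le_abs hw hwK h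
  have hmono : Monotone v := monotone_of_hasDerivAt_nonneg hv fun t =>
    (mul_nonneg hc.le (sq_nonneg _)).trans (hvw t)
  obtain ⟨L, hL⟩ : ∃ L, Tendsto v atTop (𝓝 L) :=
    (tendsto_atTop_of_monotone hmono).resolve_left fun htop =>
      ((htop.eventually_gt_atTop A).and hvA).exists.elim fun _ ht => ht.1.not_ge ht.2
  have hstep : Tendsto (fun t => v (t + δ) - v t) atTop (𝓝 0) := by
    simpa using (hL.comp (tendsto_atTop_add_const_right _ δ tendsto_id)).sub hL
  obtain ⟨t, hwt, hvt⟩ := (hfreq.and_eventually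
    (hstep.eventually (gt_mem_nhds (show 0 < c * ε ^ 2 * δ by positivity)))).exists
  obtain ⟨ξ, hξ, hslope⟩ := exists_hasDerivAt_eq_slope v v' (lt_add_of_pos_right t hδ)
    (fun s _ => (hv s).continuousAt.continuousWithinAt) (fun s _ => hv s)
  have hwξ := hwt ξ (Ioo_subset_Icc_self hξ)
  have hv'ξ : c * ε ^ 2 ≤ v' ξ := (hvw ξ).trans' <| by
    rw [← sq_abs (w ξ)]; gcongr
  rw [hslope, add_sub_cancel_left, le_div_iff₀ hδ] at hv'ξ
  linarith

/-- Landau's inequality, qualitatively. -/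
theorem tendsto_deriv_zero_of_tendsto {f f' f'' : ℝ → ℝ} {L K : ℝ}
    (hf : ∀ t, HasDerivAt f (f' t) t) (hf' : ∀ t, HasDerivAt f' (f'' t) t)
    (hfL : Tendsto f atTop (𝓝 L)) (hK : ∀ᶠ t in atTop, |f'' t| ≤ K) :
    Tendsto f' atTop (𝓝 0) := by
  by_contra h
  obtain ⟨ε, hε, δ, hδ, hfreq⟩ := exists_frequently_forall_Icc_le_abs hf' hK h
  have hstep : Tendsto (fun t => f (t + δ) - f t) atTop (𝓝 0) := by
    simpa using (hfL.comp (tendsto_atTop_add_const_right _ δ tendsto_id)).sub hfL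
  obtain ⟨t, hf't, hft⟩ := (hfreq.and_eventually
    (Metric.tendsto_nhds.1 hstep (ε * δ) (by positivity))).exists
  obtain ⟨ξ, hξ, hslope⟩ := exists_hasDerivAt_eq_slope f f' (lt_add_of_pos_right t hδ)
    (fun s _ => (hf s).continuousAt.continuousWithinAt) (fun s _ => hf s)
  have hf'ξ := hf't ξ (Ioo_subset_Icc_self hξ)
  rw [hslope, add_sub_cancel_left, abs_div, abs_of_pos hδ, le_div_iff₀ hδ] at hf'ξ
  rw [Real.dist_eq, sub_zero] at hft
  linarith

end Asymptotics

theorem IsCompact.exists_eventually_abs_comp_le {α X : Type*} [TopologicalSpace X] {l : Filter α}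
    {K : Set X} (hK : IsCompact K) {x : α → X} (hxK : ∀ᶠ a in l, x a ∈ K) {P : X → ℝ}
    (hP : Continuous P) : ∃ C, ∀ᶠ a in l, |P (x a)| ≤ C := by
  obtain ⟨C, hC⟩ := hK.exists_bound_of_continuousOn hP.continuousOn
  exact ⟨C, hxK.mono fun a ha => hC _ ha⟩

theorem IsCompact.tendsto_infDist_preimage {α X Y : Type*} [PseudoMetricSpace X]
    [TopologicalSpace Y] [T2Space Y] {l : Filter α} {K : Set X} (hK : IsCompact K)
    {x : α → X} (hxK : ∀ᶠ a in l, x a ∈ K) {F : X → Y} (hF : Continuous F) {c : Y}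
    (hFx : Tendsto (F ∘ x) l (𝓝 c)) : Tendsto (fun a => infDist (x a) (F ⁻¹' {c})) l (𝓝 0) := by
  rw [Metric.tendsto_nhds]
  intro ε hε
  set S := K ∩ {y | ε ≤ infDist y (F ⁻¹' {c})}
  have hS : IsCompact S := hK.inter_right (isClosed_le continuous_const (continuous_infDist_pt _))
  have hcS : c ∉ F '' S := by
    rintro ⟨y, hyS, rfl⟩
    exact hε.not_ge (hyS.2.trans (infDist_zero_of_mem (x := y) (mem_singleton (F y))).le)
  filter_upwards [hxK, hFx ((hS.image hF).isClosed.isOpen_compl.mem_nhds hcS)] with a hxa hFa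
  rw [Real.dist_eq, sub_zero, abs_of_nonneg infDist_nonneg]
  exact not_le.1 fun h => hFa ⟨x a, ⟨hxa, h⟩, rfl⟩

theorem Matrix.PosSemidef.eval_gram_nonneg {σ ι : Type*} [Fintype ι] {Q : Matrix ι ι ℝ}
    (hQ : Q.PosSemidef) (a : ι → MvPolynomial σ ℝ) (φ : σ → ℝ) :
    0 ≤ eval φ (∑ i, ∑ j, C (Q i j) * a i * a j) := by
  refine (hQ.dotProduct_mulVec_nonneg fun i => eval φ (a i)).trans_eq ?_
  simp only [dotProduct, Matrix.mulVec, star_trivial, Finset.mul_sum, map_sum, map_mul, eval_C]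
  exact Finset.sum_congr rfl fun i _ => Finset.sum_congr rfl fun j _ => by ring

theorem MvPolynomial.hasDerivAt_eval {ι : Type*} [Fintype ι] [DecidableEq ι] {γ : ℝ → ι → ℝ}
    {γ' : ι → ℝ} {t : ℝ} (hγ : HasDerivAt γ γ' t) (P : MvPolynomial ι ℝ) :
    HasDerivAt (fun u => eval (γ u) P) (∑ i, γ' i * eval (γ t) (pderiv i P)) t := by
  induction P using MvPolynomial.induction_on with
  | C c => simpa using hasDerivAt_const t c
  | add p q hp hq => simpa only [map_add, mul_add, Finset.sum_add_distrib] using hp.fun_add hq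
  | mul_X p i hp =>
    simp only [map_mul, eval_X]
    refine (hp.fun_mul (hasDerivAt_pi.1 hγ i)).congr_deriv ?_
    simp only [Derivation.leibniz, pderiv_X, smul_eq_mul, map_add, map_mul, eval_X, mul_add,
      Finset.sum_add_distrib, Pi.single_apply, apply_ite (eval (γ t)), map_zero,
      mul_ite, mul_one, mul_zero, Finset.sum_ite_eq, Finset.mem_univ, if_true, Finset.sum_mul]
    rw [add_comm]
    congr 1
    · ring
    · exact Finset.sum_congr rfl fun _ _ => by ring

def IsLorenzSolution (σ β ρ : ℝ) (x : ℝ → EuclideanSpace ℝ (Fin 3)) : Prop :=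
  ∀ t, HasDerivAt (fun u => x u 0) (σ * (x t 1 - x t 0)) t ∧
    HasDerivAt (fun u => x u 1) (x t 0 * (ρ - x t 2) - x t 1) t ∧
    HasDerivAt (fun u => x u 2) (x t 0 * x t 1 - β * x t 2) t

def lorenzEquilibria (σ β ρ : ℝ) : Set (EuclideanSpace ℝ (Fin 3)) :=
  {y | σ * (y 1 - y 0) = 0 ∧ y 0 * (ρ - y 2) - y 1 = 0 ∧ y 0 * y 1 - β * y 2 = 0}

namespace IsLorenzSolution

variable {σ β ρ : ℝ} {x : ℝ → EuclideanSpace ℝ (Fin 3)}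

theorem hasDerivAt_sub (hx : IsLorenzSolution σ β ρ x) (t : ℝ) :
    HasDerivAt (fun u => x u 1 - x u 0)
      (x t 0 * (ρ - 1 - x t 2) - (σ + 1) * (x t 1 - x t 0)) t :=
  ((hx t).2.1.fun_sub (hx t).1).congr_deriv (by ring)

section Dissipative

variable (hσ : 0 < σ) (hβ : 0 < β) (hx : IsLorenzSolution σ β ρ x)
include hσ hβ hx

theorem exists_isCompact : ∃ K, IsCompact K ∧ ∀ᶠ t in atTop, x t ∈ K := by
  set r := ρ + σ
  set c := min (min (2 * σ) 2) β
  have hc : 0 < c := lt_min (lt_min (by positivity) two_pos) hβ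
  have hL : ∀ t, HasDerivAt (fun u => x u 0 ^ 2 + x u 1 ^ 2 + (x u 2 - r) ^ 2)
      (2 * x t 0 * (σ * (x t 1 - x t 0)) + 2 * x t 1 * (x t 0 * (ρ - x t 2) - x t 1)
        + 2 * (x t 2 - r) * (x t 0 * x t 1 - β * x t 2)) t := fun t =>
    ((((hx t).1.fun_pow 2).fun_add ((hx t).2.1.fun_pow 2)).fun_add
      (((hx t).2.2.sub_const r).fun_pow 2)).congr_deriv (by ring)
  -- for `L = x₁² + x₂² + (x₃ - r)²`,
  -- `L' + c L - β r² = -(2σ - c) x₁² - (2 - c) x₂² - (β - c) (x₃ - r)² - β x₃²`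
  have hbound : ∀ t, 2 * x t 0 * (σ * (x t 1 - x t 0))
      + 2 * x t 1 * (x t 0 * (ρ - x t 2) - x t 1) + 2 * (x t 2 - r) * (x t 0 * x t 1 - β * x t 2)
        ≤ -c * (x t 0 ^ 2 + x t 1 ^ 2 + (x t 2 - r) ^ 2) + β * r ^ 2 := fun t => by
    have h₁ : c ≤ 2 * σ := (min_le_left _ _).trans (min_le_left _ _)
    have h₂ : c ≤ 2 := (min_le_left _ _).trans (min_le_right _ _)
    have h₃ : c ≤ β := min_le_right _ _
    nlinarith [mul_nonneg (sub_nonneg.2 h₁) (sq_nonneg (x t 0)),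
      mul_nonneg (sub_nonneg.2 h₂) (sq_nonneg (x t 1)),
      mul_nonneg (sub_nonneg.2 h₃) (sq_nonneg (x t 2 - r)), mul_nonneg hβ.le (sq_nonneg (x t 2))]
  refine ⟨closedBall !₂[0, 0, r] √(β * r ^ 2 / c + 1), isCompact_closedBall _ _, ?_⟩
  filter_upwards [eventually_lt_of_deriv_le_neg_mul_add hc hL (a := 0) (fun t _ => hbound t)
    (lt_add_one _)] with t ht
  rw [mem_closedBall, EuclideanSpace.dist_eq]
  simpa [Fin.sum_univ_three, Real.dist_eq, sq_abs] using Real.sqrt_le_sqrt ht.le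

theorem exists_eventually_abs_le {P : EuclideanSpace ℝ (Fin 3) → ℝ} (hP : Continuous P) :
    ∃ C, ∀ᶠ t in atTop, |P (x t)| ≤ C :=
  let ⟨_, hK, hxK⟩ := exists_isCompact hσ hβ hx
  hK.exists_eventually_abs_comp_le hxK hP

theorem tendsto_sub_of_sq_sub_le_deriv {v v' : ℝ → ℝ} {c A : ℝ} (hc : 0 < c)
    (hv : ∀ t, HasDerivAt v (v' t) t) (hvx : ∀ t, c * (x t 1 - x t 0) ^ 2 ≤ v' t)
    (hvA : ∀ᶠ t in atTop, v t ≤ A) : Tendsto (fun t => x t 1 - x t 0) atTop (𝓝 0) := by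
  obtain ⟨K, hK⟩ := exists_eventually_abs_le hσ hβ hx
    (P := fun y => y 0 * (ρ - 1 - y 2) - (σ + 1) * (y 1 - y 0)) (by fun_prop)
  exact tendsto_zero_of_sq_le_deriv hc hv hx.hasDerivAt_sub hvx hvA hK

variable (hw : Tendsto (fun t => x t 1 - x t 0) atTop (𝓝 0))
include hw

theorem tendsto_sq_sub_mul : Tendsto (fun t => x t 0 ^ 2 - β * x t 2) atTop (𝓝 0) := by
  obtain ⟨C, hC⟩ := exists_eventually_abs_le hσ hβ hx (P := fun y => (2 * σ - β) * y 0)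
    (by fun_prop)
  refine tendsto_zero_of_deriv_eq_neg_mul_add hβ
    (fun t => ((hx t).1.fun_pow 2).fun_sub ((hx t).2.2.const_mul β)) (fun t => ?_)
    (hw.zero_mul_isBoundedUnder_le (isBoundedUnder_of_eventually_le hC))
  ring

theorem tendsto_mul_sub_sub : Tendsto (fun t => x t 0 * (ρ - 1 - x t 2)) atTop (𝓝 0) := by
  set P : EuclideanSpace ℝ (Fin 3) → ℝ := fun y => σ * (y 1 - y 0) * (ρ - 1 - y 2)
    - y 0 * (y 0 * y 1 - β * y 2) - (σ + 1) * (y 0 * (ρ - 1 - y 2) - (σ + 1) * (y 1 - y 0))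
  have hP : ∀ t, HasDerivAt (fun u => x u 0 * (ρ - 1 - x u 2) - (σ + 1) * (x u 1 - x u 0))
      (P (x t)) t := fun t =>
    (((hx t).1.fun_mul ((hx t).2.2.const_sub (ρ - 1))).fun_sub
      ((hx.hasDerivAt_sub t).const_mul (σ + 1))).congr_deriv (by ring)
  obtain ⟨K, hK⟩ := exists_eventually_abs_le hσ hβ hx (P := P) (by fun_prop)
  have hw' := tendsto_deriv_zero_of_tendsto hx.hasDerivAt_sub hP hw hK
  simpa using (hw'.add (hw.const_mul (σ + 1))).congr fun t => by ring

theorem tendsto_infDist_lorenzEquilibria :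
    Tendsto (fun t => infDist (x t) (lorenzEquilibria σ β ρ)) atTop (𝓝 0) := by
  set F : EuclideanSpace ℝ (Fin 3) → ℝ × ℝ × ℝ :=
    fun y => (y 1 - y 0, y 0 * (ρ - 1 - y 2), y 0 ^ 2 - β * y 2)
  have hE : lorenzEquilibria σ β ρ = F ⁻¹' {0} := by
    ext y
    simp only [lorenzEquilibria, F, mem_ofPred_eq, mem_preimage, mem_singleton_iff,
      Prod.mk_eq_zero]
    constructor
    · rintro ⟨h₁, h₂, h₃⟩
      replace h₁ := (mul_eq_zero.1 h₁).resolve_left hσ.ne'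
      exact ⟨h₁, by linear_combination h₂ + h₁, by linear_combination h₃ - y 0 * h₁⟩
    · rintro ⟨h₁, h₂, h₃⟩
      exact ⟨by rw [h₁, mul_zero], by linear_combination h₂ - h₁,
        by linear_combination h₃ + y 0 * h₁⟩
  obtain ⟨K, hK, hxK⟩ := exists_isCompact hσ hβ hx
  rw [hE]
  exact hK.tendsto_infDist_preimage hxK (by fun_prop) <| hw.prodMk_nhds <|
    (tendsto_mul_sub_sub hσ hβ hx hw).prodMk_nhds (tendsto_sq_sub_mul hσ hβ hx hw)

end Dissipative

end IsLorenzSolution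

/-- The change of variables `x = M x̃`, `ρ = M r + 1` of the certificate. -/
noncomputable def lorenzScaledPoint (M ρ : ℝ) (y : EuclideanSpace ℝ (Fin 3)) : Fin 4 → ℝ :=
  ![y 0 / M, y 1 / M, y 2 / M, (ρ - 1) / M]

/-- Three times the derivative of `P` along the Lorenz field with `σ = 10`, `β = 8/3`, in the
variables `(x̃, r)` of `lorenzScaledPoint`. -/
noncomputable def scaledLorenzLieDeriv (M : ℝ) (P : MvPolynomial (Fin 4) ℝ) :
    MvPolynomial (Fin 4) ℝ :=
  (30 * X 1 - 30 * X 0) * pderiv 0 P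
    + (C (3 * M) * X 0 * X 3 - C (3 * M) * X 0 * X 2 - 3 * X 1 + 3 * X 0) * pderiv 1 P
    + (C (3 * M) * X 0 * X 1 - 8 * X 2) * pderiv 2 P

theorem IsLorenzSolution.hasDerivAt_eval_lorenzScaledPoint {ρ M : ℝ}
    {x : ℝ → EuclideanSpace ℝ (Fin 3)} (hx : IsLorenzSolution 10 (8 / 3) ρ x) (hM : M ≠ 0)
    (P : MvPolynomial (Fin 4) ℝ) (t : ℝ) :
    HasDerivAt (fun u => eval (lorenzScaledPoint M ρ (x u)) P)
      (eval (lorenzScaledPoint M ρ (x t)) (scaledLorenzLieDeriv M P) / 3) t := by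
  have hγ : HasDerivAt (fun u => lorenzScaledPoint M ρ (x u))
      ![10 * (x t 1 - x t 0) / M, (x t 0 * (ρ - x t 2) - x t 1) / M,
        (x t 0 * x t 1 - 8 / 3 * x t 2) / M, 0] t := by
    refine hasDerivAt_pi.2 fun i => ?_
    fin_cases i
    exacts [(hx t).1.div_const M, (hx t).2.1.div_const M, (hx t).2.2.div_const M,
      hasDerivAt_const t _]
  refine (hasDerivAt_eval hγ P).congr_deriv ?_
  simp [Fin.sum_univ_four, scaledLorenzLieDeriv, lorenzScaledPoint]
  field_simp
  ring

theorem sq_sub_le_eval_scaledLorenzLieDeriv_of_gram {ι κ : Type*} [Fintype ι] [Fintype κ]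
    {M rmin rmax : ℝ} {V : MvPolynomial (Fin 4) ℝ} {b : κ → MvPolynomial (Fin 4) ℝ}
    {s : MvPolynomial (Fin 3) ℝ} {a : ι → MvPolynomial (Fin 3) ℝ}
    {Q : Matrix ι ι ℝ} {R : Matrix κ κ ℝ} (hQ : Q.PosSemidef) (hR : R.PosSemidef)
    (hs : s = ∑ i, ∑ j, C (Q i j) * a i * a j)
    (hcert : scaledLorenzLieDeriv M V - (X 1 - X 0) ^ 2
        - C (M ^ 2) * (X 3 - C rmin) * (C rmax - X 3) * rename Fin.castSucc s
      = ∑ i, ∑ j, C (R i j) * b i * b j)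
    {φ : Fin 4 → ℝ} (hφ₁ : rmin ≤ φ 3) (hφ₂ : φ 3 ≤ rmax) :
    (φ 1 - φ 0) ^ 2 ≤ eval φ (scaledLorenzLieDeriv M V) := by
  have h := congrArg (eval φ) hcert
  simp only [map_sub, map_mul, map_pow, eval_C, eval_X, eval_rename] at h
  have hs₀ : 0 ≤ eval (φ ∘ Fin.castSucc) s := hs ▸ hQ.eval_gram_nonneg a _
  have hrs : 0 ≤ M ^ 2 * (φ 3 - rmin) * (rmax - φ 3) * eval (φ ∘ Fin.castSucc) s :=
    mul_nonneg (mul_nonneg (mul_nonneg (sq_nonneg M) (sub_nonneg.2 hφ₁)) (sub_nonneg.2 hφ₂)) hs₀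
  linarith [hR.eval_gram_nonneg b φ]

/-- Variables of the certificate: `X 0, X 1, X 2` are `x₁, x₂, x₃` and `X 3` is `r`. -/
theorem lorenz_globally_stable_of_sos_general
    (M : ℤ) (hM : 1 ≤ M) (rmin rmax : ℝ)
    (m₁ m₂ : ℕ)
    (V : MvPolynomial (Fin 4) ℝ) (b : Fin m₂ → MvPolynomial (Fin 4) ℝ)
    (s : MvPolynomial (Fin 3) ℝ) (a : Fin m₁ → MvPolynomial (Fin 3) ℝ)
    (Q : Matrix (Fin m₁) (Fin m₁) ℝ) (R : Matrix (Fin m₂) (Fin m₂) ℝ)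
    (hQ : Q.PosSemidef) (hR : R.PosSemidef)
    (hs : s = ∑ i, ∑ j, C (Q i j) * a i * a j)
    (hmain :
      (30 * X 1 - 30 * X 0) * pderiv 0 V
        + (C (3 * (M : ℝ)) * X 0 * X 3 - C (3 * (M : ℝ)) * X 0 * X 2 - 3 * X 1 + 3 * X 0)
            * pderiv 1 V
        + (C (3 * (M : ℝ)) * X 0 * X 1 - 8 * X 2) * pderiv 2 V
        - (X 1 - X 0) ^ 2
        - C ((M : ℝ) ^ 2) * (X 3 - C rmin) * (C rmax - X 3) * rename Fin.castSucc s
      = ∑ i, ∑ j, C (R i j) * b i * b j) :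
    ∀ ρ : ℝ, (M : ℝ) * rmin + 1 ≤ ρ → ρ ≤ (M : ℝ) * rmax + 1 →
      ∀ x : ℝ → EuclideanSpace ℝ (Fin 3),
        (∀ t : ℝ,
          HasDerivAt (fun u => x u 0) (10 * (x t 1 - x t 0)) t ∧
          HasDerivAt (fun u => x u 1) (x t 0 * (ρ - x t 2) - x t 1) t ∧
          HasDerivAt (fun u => x u 2) (x t 0 * x t 1 - (8 / 3) * x t 2) t) →
        Tendsto (fun t => Metric.infDist (x t)
            {y : EuclideanSpace ℝ (Fin 3) |
              10 * (y 1 - y 0) = 0 ∧ y 0 * (ρ - y 2) - y 1 = 0 ∧ y 0 * y 1 - (8 / 3) * y 2 = 0})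
          atTop (𝓝 0) := by
  intro ρ hρ₁ hρ₂ x hx
  replace hx : IsLorenzSolution 10 (8 / 3) ρ x := hx
  have hσ : (0 : ℝ) < 10 := by norm_num
  have hβ : (0 : ℝ) < 8 / 3 := by norm_num
  have hM₀ : (0 : ℝ) < M := by exact_mod_cast hM
  have hr₁ : rmin ≤ (ρ - 1) / M := by rw [le_div_iff₀ hM₀]; linarith
  have hr₂ : (ρ - 1) / M ≤ rmax := by rw [div_le_iff₀ hM₀]; linarith
  obtain ⟨A, hA⟩ := hx.exists_eventually_abs_le hσ hβ
    (P := fun y => eval (lorenzScaledPoint M ρ y) V)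
    ((continuous_eval V).comp (by unfold lorenzScaledPoint; fun_prop))
  refine hx.tendsto_infDist_lorenzEquilibria hσ hβ <| hx.tendsto_sub_of_sq_sub_le_deriv hσ hβ
    (c := 1 / (3 * M ^ 2)) (by positivity) (hx.hasDerivAt_eval_lorenzScaledPoint hM₀.ne' V)
    (fun t => ?_) (hA.mono fun _ h => (le_abs_self _).trans h)
  have h := sq_sub_le_eval_scaledLorenzLieDeriv_of_gram hQ hR hs hmain
    (φ := lorenzScaledPoint M ρ (x t)) hr₁ hr₂
  calc 1 / (3 * M ^ 2) * (x t 1 - x t 0) ^ 2 = (x t 1 / M - x t 0 / M) ^ 2 / 3 := by field_simp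
    _ ≤ _ := by gcongr; simpa [lorenzScaledPoint] using h

/-- Sum-of-squares certificate: variables are `X 0 = x₁`, `X 1 = x₂`,
`X 2 = x₃`, `X 3 = r`. If the two Gram-matrix polynomial identities hold with positive
semidefinite matrices `Q`, `R`, then the Lorenz system with `σ = 10`, `β = 8/3` is globally
stable for all `ρ ∈ [M r_min + 1, M r_max + 1]`. -/
theorem lorenz_globally_stable_of_sos
    (M : ℤ) (hM : 1 ≤ M) (rmin rmax : ℝ) (hr : rmin ≤ rmax)
    (m₁ m₂ : ℕ)
    (V : MvPolynomial (Fin 4) ℝ) (b : Fin m₂ → MvPolynomial (Fin 4) ℝ)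
    (s : MvPolynomial (Fin 3) ℝ) (a : Fin m₁ → MvPolynomial (Fin 3) ℝ)
    (Q : Matrix (Fin m₁) (Fin m₁) ℝ) (R : Matrix (Fin m₂) (Fin m₂) ℝ)
    (hQ : Q.PosSemidef) (hR : R.PosSemidef)
    (hs : s = ∑ i, ∑ j, C (Q i j) * a i * a j)
    (hmain :
      (30 * X 1 - 30 * X 0) * pderiv 0 V
        + (C (3 * (M : ℝ)) * X 0 * X 3 - C (3 * (M : ℝ)) * X 0 * X 2 - 3 * X 1 + 3 * X 0)
            * pderiv 1 V
        + (C (3 * (M : ℝ)) * X 0 * X 1 - 8 * X 2) * pderiv 2 V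
        - (X 1 - X 0) ^ 2
        - C ((M : ℝ) ^ 2) * (X 3 - C rmin) * (C rmax - X 3) * rename Fin.castSucc s
      = ∑ i, ∑ j, C (R i j) * b i * b j) :
    ∀ ρ : ℝ, (M : ℝ) * rmin + 1 ≤ ρ → ρ ≤ (M : ℝ) * rmax + 1 →
      ∀ x : ℝ → EuclideanSpace ℝ (Fin 3),
        (∀ t : ℝ,
          HasDerivAt (fun u => x u 0) (10 * (x t 1 - x t 0)) t ∧
          HasDerivAt (fun u => x u 1) (x t 0 * (ρ - x t 2) - x t 1) t ∧
          HasDerivAt (fun u => x u 2) (x t 0 * x t 1 - (8 / 3) * x t 2) t) →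
        Tendsto (fun t => Metric.infDist (x t)
            {y : EuclideanSpace ℝ (Fin 3) |
              10 * (y 1 - y 0) = 0 ∧ y 0 * (ρ - y 2) - y 1 = 0 ∧ y 0 * y 1 - (8 / 3) * y 2 = 0})
          atTop (𝓝 0) :=
  lorenz_globally_stable_of_sos_general M hM rmin rmax m₁ m₂ V b s a Q R hQ hR hs hmain
end

section
/- Let f : ℝⁿ → ℝⁿ be a continuous map, and suppose there exists a continuous function V : ℝⁿ → ℝ such that V(f(x)) − V(x) ≥ ‖f(x) − x‖² for all x ∈ ℝⁿ (Euclidean norm). Then every limit point of the system is a fixed point of f: for every x ∈ ℝⁿ and every y ∈ ω(x, f), f(y) = y. -/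
open Filter Topology

set_option maxHeartbeats 1000000 in
/-- If `V` is continuous with `V(f(x)) - V(x) ≥ ‖f(x) - x‖²` everywhere,
then every ω-limit point of the continuous map `f` is a fixed point of `f`. -/
theorem map_limit_points_are_fixed_points
    (n : ℕ)
    (f : EuclideanSpace ℝ (Fin n) → EuclideanSpace ℝ (Fin n))
    (hf : Continuous f)
    (V : EuclideanSpace ℝ (Fin n) → ℝ)
    (hV : Continuous V)
    (hVf : ∀ x, ‖f x - x‖ ^ 2 ≤ V (f x) - V x)
    (x y : EuclideanSpace ℝ (Fin n))
    (hy : ∃ ns : ℕ → ℕ, StrictMono ns ∧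
      Tendsto (fun k => f^[ns k] x) atTop (𝓝 y)) :
    f y = y := by
  obtain ⟨ns, hns, hlim⟩ := hy
  set a : ℕ → ℝ := fun k => V (f^[k] x) with ha
  have hmono : Monotone a := by
    apply monotone_nat_of_le_succ
    intro k
    have := hVf (f^[k] x)
    have h2 : (0:ℝ) ≤ ‖f (f^[k] x) - f^[k] x‖ ^ 2 := by positivity
    simp only [ha, Function.iterate_succ_apply']
    linarith
  have hsub : Tendsto (fun k => a (ns k)) atTop (𝓝 (V y)) :=
    (hV.continuousAt.tendsto).comp hlim
  have hfull : Tendsto a atTop (𝓝 (V y)) := by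
    rcases tendsto_of_monotone hmono with h | ⟨l, hl⟩
    · exact absurd hsub (not_tendsto_nhds_of_tendsto_atTop
        (h.comp hns.tendsto_atTop) _)
    · have : Tendsto (fun k => a (ns k)) atTop (𝓝 l) :=
        hl.comp hns.tendsto_atTop
      rwa [tendsto_nhds_unique this hsub] at hl
  have hfy : Tendsto (fun k => f^[ns k + 1] x) atTop (𝓝 (f y)) := by
    simp only [Function.iterate_succ_apply']
    exact (hf.continuousAt.tendsto).comp hlim
  have hVfy : Tendsto (fun k => a (ns k + 1)) atTop (𝓝 (V (f y))) :=
    (hV.continuousAt.tendsto).comp hfy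
  have hVfy' : Tendsto (fun k => a (ns k + 1)) atTop (𝓝 (V y)) :=
    hfull.comp (tendsto_atTop_mono (fun k => Nat.le_succ (ns k)) hns.tendsto_atTop)
  have hEq : V (f y) = V y := tendsto_nhds_unique hVfy hVfy'
  have := hVf y
  have hnorm : ‖f y - y‖ ^ 2 ≤ 0 := by linarith
  have : ‖f y - y‖ = 0 := by nlinarith [norm_nonneg (f y - y)]
  exact sub_eq_zero.mp (norm_eq_zero.mp this)
end

section
/- Let f : ℝⁿ → ℝⁿ be a continuous map and k ≥ 1 a natural number, and suppose there exists a continuous function V : ℝⁿ → ℝ such that V(f(x)) − V(x) ≥ ‖f^k(x) − x‖² for all x ∈ ℝⁿ, where f^k denotes the k-th iterate of f and ‖·‖ is the Euclidean norm. Then every limit point of the system is a periodic point of period dividing k: for every x ∈ ℝⁿ and every y ∈ ω(x, f), f^k(y) = y. -/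
open Filter Topology

/-- If `V` is continuous with `V(f(x)) - V(x) ≥ ‖f^[k](x) - x‖²`
everywhere (for a fixed `k ≥ 1`), then every ω-limit point of the continuous map `f` is a
periodic point of period dividing `k`. -/
theorem map_limit_points_are_periodic
    (n : ℕ) (k : ℕ) (hk : 1 ≤ k)
    (f : EuclideanSpace ℝ (Fin n) → EuclideanSpace ℝ (Fin n))
    (hf : Continuous f)
    (V : EuclideanSpace ℝ (Fin n) → ℝ)
    (hV : Continuous V)
    (hVf : ∀ x, ‖f^[k] x - x‖ ^ 2 ≤ V (f x) - V x)
    (x y : EuclideanSpace ℝ (Fin n))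
    (hy : ∃ ns : ℕ → ℕ, StrictMono ns ∧
      Tendsto (fun j => f^[ns j] x) atTop (𝓝 y)) :
    f^[k] y = y := by
  obtain ⟨ns, hmono, hlim⟩ := hy
  set a : ℕ → ℝ := fun m => V (f^[m] x) with ha
  have hstep : ∀ m, ‖f^[k] (f^[m] x) - f^[m] x‖ ^ 2 ≤ a (m + 1) - a m := by
    intro m
    have := hVf (f^[m] x)
    simpa [ha, Function.iterate_succ_apply'] using this
  have hamono : Monotone a := monotone_nat_of_le_succ fun m => by
    have h1 := hstep m
    nlinarith [sq_nonneg ‖f^[k] (f^[m] x) - f^[m] x‖]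
  have haV : Tendsto (fun j => a (ns j)) atTop (𝓝 (V y)) :=
    (hV.tendsto y).comp hlim
  have hsubmono : Monotone fun j => a (ns j) := hamono.comp hmono.monotone
  have hsub_le : ∀ j, a (ns j) ≤ V y := hsubmono.ge_of_tendsto haV
  have hbdd : BddAbove (Set.range a) := by
    refine ⟨V y, ?_⟩
    rintro _ ⟨m, rfl⟩
    exact (hamono (hmono.le_apply)).trans (hsub_le m)
  have haLim : Tendsto a atTop (𝓝 (V y)) := by
    have h1 : Tendsto a atTop (𝓝 (⨆ m, a m)) := tendsto_atTop_ciSup hamono hbdd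
    have h2 : Tendsto (fun j => a (ns j)) atTop (𝓝 (⨆ m, a m)) :=
      h1.comp hmono.tendsto_atTop
    rwa [tendsto_nhds_unique h2 haV] at h1
  have hns1 : Tendsto (fun j => ns j + 1) atTop atTop :=
    tendsto_atTop_mono (fun j => Nat.le_succ _) hmono.tendsto_atTop
  have hdiff : Tendsto (fun j => a (ns j + 1) - a (ns j)) atTop (𝓝 0) := by
    have := (haLim.comp hns1).sub haV
    simpa using this
  have hcont : Tendsto (fun j => ‖f^[k] (f^[ns j] x) - f^[ns j] x‖ ^ 2) atTop
      (𝓝 (‖f^[k] y - y‖ ^ 2)) := by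
    have hc : Continuous fun z : EuclideanSpace ℝ (Fin n) => ‖f^[k] z - z‖ ^ 2 :=
      (((hf.iterate k).sub continuous_id).norm).pow 2
    exact (hc.tendsto y).comp hlim
  have hle : ‖f^[k] y - y‖ ^ 2 ≤ 0 :=
    le_of_tendsto_of_tendsto' hcont hdiff fun j => hstep (ns j)
  have : ‖f^[k] y - y‖ = 0 := by nlinarith [sq_nonneg ‖f^[k] y - y‖, norm_nonneg (f^[k] y - y)]
  have := norm_eq_zero.mp this
  exact sub_eq_zero.mp this
end

section
/- Let f : ℝ → ℝ be continuously differentiable and admit a global flow φ : ℝ × ℝ → ℝ. If x ∈ ℝ is such that the forward orbit {φ(x, t) : t ≥ 0} is bounded, then φ(x, t) converges as t → ∞ to a point z ∈ ℝ with f(z) = 0 (i.e. every bounded trajectory of a one-dimensional autonomous ODE converges to a stationary point). -/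
/-!
By uniqueness of solutions (`f` is C¹, hence locally Lipschitz), a trajectory that touches a zero
of `f` is constant, and otherwise Darboux's theorem gives `f ∘ φ x` a constant sign; either way
`t ↦ φ x t` is monotone, so boundedness makes it converge. Its derivative `f (φ x t)` then tends
to `f z`, and by the mean value theorem this limit must be `0`.
-/

open Filter Topology Set

theorem LocallyLipschitz.eq_of_hasDerivAt_comp {E : Type*} [NormedAddCommGroup E]
    [NormedSpace ℝ E] {f : E → E} (hf : LocallyLipschitz f) {u v : ℝ → E}
    (hu : ∀ t, HasDerivAt u (f (u t)) t) (hv : ∀ t, HasDerivAt v (f (v t)) t) {t₀ : ℝ}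
    (heq : u t₀ = v t₀) : u = v := by
  ext t
  obtain ⟨a, b, ht, ht₀⟩ : ∃ a b, t ∈ Ioo a b ∧ t₀ ∈ Ioo a b :=
    ⟨min t t₀ - 1, max t t₀ + 1, by grind, by grind⟩
  set s := u '' Icc a b ∪ v '' Icc a b
  have hs : IsCompact s :=
    (isCompact_Icc.image (continuous_iff_continuousAt.2 fun r ↦ (hu r).continuousAt)).union
      (isCompact_Icc.image (continuous_iff_continuousAt.2 fun r ↦ (hv r).continuousAt))
  obtain ⟨K, hK⟩ := hf.locallyLipschitzOn.exists_lipschitzOnWith_of_compact hs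
  exact ODE_solution_unique_of_mem_Ioo (v := fun _ ↦ f) (s := fun _ ↦ s) (fun _ _ ↦ hK) ht₀
    (fun r hr ↦ ⟨hu r, .inl ⟨r, Ioo_subset_Icc_self hr, rfl⟩⟩)
    (fun r hr ↦ ⟨hv r, .inr ⟨r, Ioo_subset_Icc_self hr, rfl⟩⟩) heq ht

theorem LocallyLipschitz.monotone_or_antitone_of_hasDerivAt_comp {f : ℝ → ℝ}
    (hf : LocallyLipschitz f) {u : ℝ → ℝ} (hu : ∀ t, HasDerivAt u (f (u t)) t) :
    Monotone u ∨ Antitone u := by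
  by_cases hzero : ∃ t₀, f (u t₀) = 0
  · obtain ⟨t₀, ht₀⟩ := hzero
    have hconst : u = fun _ ↦ u t₀ :=
      hf.eq_of_hasDerivAt_comp hu (fun _ ↦ ht₀ ▸ hasDerivAt_const _ _) rfl
    exact .inl (hconst ▸ monotone_const)
  · push Not at hzero
    rcases hasDerivWithinAt_forall_lt_or_forall_gt_of_forall_ne convex_univ
      (fun t _ ↦ (hu t).hasDerivWithinAt) (fun t _ ↦ hzero t) with hneg | hpos
    · exact .inr (antitone_of_deriv_nonpos (fun t ↦ (hu t).differentiableAt)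
        fun t ↦ (hu t).deriv ▸ (hneg t trivial).le)
    · exact .inl (monotone_of_deriv_nonneg (fun t ↦ (hu t).differentiableAt)
        fun t ↦ (hu t).deriv ▸ (hpos t trivial).le)

theorem exists_tendsto_atTop_of_monotone_or_antitone {u : ℝ → ℝ}
    (hu : Monotone u ∨ Antitone u) (hbdd : Bornology.IsBounded (u '' Ici 0)) :
    ∃ z, Tendsto u atTop (𝓝 z) := by
  rcases hu with hmono | hanti
  · refine (tendsto_atTop_of_monotone hmono).resolve_left fun h ↦ ?_
    obtain ⟨M, hM⟩ := hbdd.bddAbove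
    obtain ⟨t, hMt, ht⟩ := ((h.eventually_gt_atTop M).and (eventually_ge_atTop 0)).exists
    exact (hM ⟨t, ht, rfl⟩).not_gt hMt
  · refine (tendsto_atTop_of_antitone hanti).resolve_left fun h ↦ ?_
    obtain ⟨M, hM⟩ := hbdd.bddBelow
    obtain ⟨t, hMt, ht⟩ := ((h.eventually_lt_atBot M).and (eventually_ge_atTop 0)).exists
    exact (hM ⟨t, ht, rfl⟩).not_gt hMt

theorem eq_zero_of_tendsto_atTop_of_hasDerivAt {u u' : ℝ → ℝ} (hu : ∀ t, HasDerivAt u (u' t) t)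
    {z L : ℝ} (hz : Tendsto u atTop (𝓝 z)) (hL : Tendsto u' atTop (𝓝 L)) : L = 0 := by
  have hcont : Continuous u := continuous_iff_continuousAt.2 fun t ↦ (hu t).continuousAt
  choose ξ hξ hslope using fun t : ℝ ↦
    exists_hasDerivAt_eq_slope u u' (lt_add_one t) hcont.continuousOn fun r _ ↦ hu r
  have hξ_atTop : Tendsto ξ atTop atTop :=
    tendsto_atTop_mono (fun t ↦ (hξ t).1.le) tendsto_id
  have hincr : Tendsto (fun t ↦ u (t + 1) - u t) atTop (𝓝 (z - z)) :=
    (hz.comp (tendsto_atTop_add_const_right _ 1 tendsto_id)).sub hz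
  refine tendsto_nhds_unique (hL.comp hξ_atTop) ?_
  simpa [Function.comp_def, hslope] using hincr

theorem one_dim_bounded_orbit_converges_general
    (f : ℝ → ℝ) (hf : ContDiff ℝ 1 f)
    (φ : ℝ → ℝ → ℝ)
    (hφ' : ∀ x t, HasDerivAt (φ x) (f (φ x t)) t)
    (x : ℝ)
    (hbdd : Bornology.IsBounded (φ x '' Set.Ici (0 : ℝ))) :
    ∃ z : ℝ, f z = 0 ∧ Tendsto (fun t => φ x t) atTop (𝓝 z) := by
  obtain ⟨z, hz⟩ := exists_tendsto_atTop_of_monotone_or_antitone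
    (hf.locallyLipschitz.monotone_or_antitone_of_hasDerivAt_comp (hφ' x)) hbdd
  exact ⟨z, eq_zero_of_tendsto_atTop_of_hasDerivAt (hφ' x) hz
    ((hf.continuous.tendsto z).comp hz), hz⟩

/-- Every bounded trajectory of a one-dimensional autonomous ODE converges
to a stationary point: if `φ` is a global flow of the C¹ vector field `f : ℝ → ℝ` and the
forward orbit of `x` is bounded, then `φ(x, t)` converges as `t → ∞` to some zero of `f`. -/
theorem one_dim_bounded_orbit_converges
    (f : ℝ → ℝ) (hf : ContDiff ℝ 1 f)
    (φ : ℝ → ℝ → ℝ)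
    (hφ : ContDiff ℝ 1 (fun p : ℝ × ℝ => φ p.1 p.2))
    (hφ0 : ∀ x, φ x 0 = x)
    (hφ' : ∀ x t, HasDerivAt (φ x) (f (φ x t)) t)
    (x : ℝ)
    (hbdd : Bornology.IsBounded (φ x '' Set.Ici (0 : ℝ))) :
    ∃ z : ℝ, f z = 0 ∧ Tendsto (fun t => φ x t) atTop (𝓝 z) :=
  one_dim_bounded_orbit_converges_general f hf φ hφ' x hbdd
end
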